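/- Let A be an n×n real symmetric matrix with eigenvalues λ₁ ≥ … ≥ λₙ, δ = λ_{n−1} − λₙ > 0, ρ = λ₁ − λₙ, γ > 0, and β ≤ δ/(4+γ). If z = Σₖ αₖ pₖ is a unit vector with αₙ² ≤ (δ − (4+γ)β)/(δ + ρ), then there exists a unit vector v with vᵀz = 0 such that vᵀAv − zᵀAz + 6β Σₖ z_k² v_k² − 2β Σₖ z_k⁴ ≤ −γβ. -/
import Mathlib


open Matrix Finset

set_option maxHeartbeats 1000000

theorem stmt14 {n : ℕ} (hn : 2 ≤ n) (A : Matrix (Fin n) (Fin n) ℝ) (hA : A.IsSymm)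
    (μ : Fin n → ℝ) (hμ : ∀ i j : Fin n, i ≤ j → μ j ≤ μ i)
    (p : Fin n → Fin n → ℝ)
    (hortho : ∀ i j, p i ⬝ᵥ p j = if i = j then (1 : ℝ) else 0)
    (heig : ∀ k, A.mulVec (p k) = μ k • p k)
    (δ ρ γ β : ℝ)
    (hδ : δ = μ ⟨n - 2, by omega⟩ - μ ⟨n - 1, by omega⟩) (hδpos : 0 < δ)
    (hρ : ρ = μ ⟨0, by omega⟩ - μ ⟨n - 1, by omega⟩)
    (hγ : 0 < γ) (hβpos : 0 < β) (hβ : β ≤ δ / (4 + γ))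
    (α : Fin n → ℝ) (z : Fin n → ℝ) (hzdef : z = ∑ k, α k • p k)
    (hα1 : ∑ k, α k ^ 2 = 1)
    (hαn : α ⟨n - 1, by omega⟩ ^ 2 ≤ (δ - (4 + γ) * β) / (δ + ρ)) :
    ∃ v : Fin n → ℝ, ∑ k, v k ^ 2 = 1 ∧ ∑ k, v k * z k = 0 ∧
      v ⬝ᵥ A.mulVec v - z ⬝ᵥ A.mulVec z
        + 6 * β * ∑ k, z k ^ 2 * v k ^ 2 - 2 * β * ∑ k, z k ^ 4 ≤ -(γ * β) := by
  have hn1 : n - 1 < n := by omega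
  have hn2 : n - 2 < n := by omega
  set m : Fin n := ⟨n - 1, hn1⟩ with hm
  set m' : Fin n := ⟨n - 2, hn2⟩ with hm'
  have hδ' : δ = μ m' - μ m := hδ
  have hρ' : ρ = μ ⟨0, by omega⟩ - μ m := hρ
  have hαn' : α m ^ 2 ≤ (δ - (4 + γ) * β) / (δ + ρ) := hαn
  -- basic dot product facts
  have hz_dot : ∀ w : Fin n → ℝ, z ⬝ᵥ w = ∑ j, α j * (p j ⬝ᵥ w) := by
    intro w
    simp only [hzdef, dotProduct, Finset.sum_apply, Pi.smul_apply, smul_eq_mul,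
      Finset.sum_mul, Finset.mul_sum]
    rw [Finset.sum_comm]
    exact Finset.sum_congr rfl fun j _ => Finset.sum_congr rfl fun i _ => by ring
  have hpz : ∀ j, p j ⬝ᵥ z = α j := by
    intro j
    rw [dotProduct_comm, hz_dot]
    simp [hortho, Finset.sum_ite_eq']
  have hzp : ∀ j, z ⬝ᵥ p j = α j := by
    intro j; rw [dotProduct_comm]; exact hpz j
  have hzz : z ⬝ᵥ z = 1 := by
    rw [hz_dot]
    simp only [hpz]
    rw [← hα1]
    exact Finset.sum_congr rfl fun j _ => (sq (α j)).symm
  have hpAw : ∀ j (w : Fin n → ℝ), p j ⬝ᵥ A.mulVec w = μ j * (p j ⬝ᵥ w) := by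
    intro j w
    rw [dotProduct_mulVec, ← mulVec_transpose, hA.eq, heig, smul_dotProduct, smul_eq_mul]
  have hq : z ⬝ᵥ A.mulVec z = ∑ j, μ j * α j ^ 2 := by
    rw [hz_dot]
    exact Finset.sum_congr rfl fun j _ => by rw [hpAw, hpz]; ring
  set q : ℝ := ∑ j, μ j * α j ^ 2 with hqdef
  set a : ℝ := α m with ha
  set s : ℝ := 1 - a ^ 2 with hsdef
  -- bounds on a
  have hδρ : δ ≤ ρ := by
    have h0 : (⟨0, by omega⟩ : Fin n) ≤ m' := by
      simp [Fin.le_def]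
    have := hμ ⟨0, by omega⟩ m' h0
    rw [hδ', hρ']; linarith
  have hδρpos : 0 < δ + ρ := by linarith
  have haD : a ^ 2 * (δ + ρ) ≤ δ - (4 + γ) * β :=
    (le_div_iff₀ hδρpos).mp hαn'
  have hkey2 : (4 + γ) * β ≤ (1 - 2 * a ^ 2) * δ := by
    nlinarith [sq_nonneg a]
  have ha2 : a ^ 2 < 1 / 2 := by nlinarith
  have hs : 0 < s := by rw [hsdef]; nlinarith
  set t : ℝ := (Real.sqrt s)⁻¹ with htdef
  have ht2 : t ^ 2 = s⁻¹ := by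
    rw [htdef, ← Real.sqrt_inv, Real.sq_sqrt (by positivity)]
  set w : Fin n → ℝ := p m - a • z with hwdef
  refine ⟨t • w, ?_, ?_, ?_⟩ <;>
    [skip; skip; skip]
  case _ =>
    have : ∑ k, (t • w) k ^ 2 = t ^ 2 * (w ⬝ᵥ w) := by
      simp only [Pi.smul_apply, smul_eq_mul, dotProduct, Finset.mul_sum]
      exact Finset.sum_congr rfl fun k _ => by ring
    rw [this, ht2]
    have hww : w ⬝ᵥ w = s := by
      simp only [hwdef, sub_dotProduct, dotProduct_sub, dotProduct_smul, smul_dotProduct,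
        smul_eq_mul, hortho, hpz, hzp, hzz]
      simp [hsdef]
      ring
    rw [hww, inv_mul_cancel₀ (ne_of_gt hs)]
  case _ =>
    have : ∑ k, (t • w) k * z k = t * (w ⬝ᵥ z) := by
      simp only [Pi.smul_apply, smul_eq_mul, dotProduct, Finset.mul_sum]
      exact Finset.sum_congr rfl fun k _ => by ring
    rw [this]
    have hwz : w ⬝ᵥ z = 0 := by
      simp only [hwdef, sub_dotProduct, smul_dotProduct, smul_eq_mul, hpz, hzz]
      ring
    rw [hwz, mul_zero]
  case _ =>
    set v : Fin n → ℝ := t • w with hvdef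
    -- quadratic form value
    have hzApm : z ⬝ᵥ A.mulVec (p m) = μ m * a := by
      rw [heig, dotProduct_smul, smul_eq_mul, hzp]
    have hwAw : w ⬝ᵥ A.mulVec w = μ m - 2 * a ^ 2 * μ m + a ^ 2 * q := by
      have hexp : A.mulVec w = A.mulVec (p m) - a • A.mulVec z := by
        rw [hwdef, Matrix.mulVec_sub, Matrix.mulVec_smul]
      rw [hwdef, hexp]
      simp only [sub_dotProduct, dotProduct_sub, dotProduct_smul, smul_dotProduct,
        smul_eq_mul, hpAw, hpz, hzApm, hortho, hq]
      simp
      ring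
    have hvAv : v ⬝ᵥ A.mulVec v = s⁻¹ * (μ m - 2 * a ^ 2 * μ m + a ^ 2 * q) := by
      rw [hvdef, Matrix.mulVec_smul, smul_dotProduct, dotProduct_smul, smul_eq_mul,
        smul_eq_mul, ← mul_assoc, ← sq, ht2, hwAw]
    -- spectral gap bound
    have hkey : ∀ j : Fin n, (if j = m then (0:ℝ) else δ * α j ^ 2) ≤ (μ j - μ m) * α j ^ 2 := by
      intro j
      by_cases hj : j = m
      · simp [hj]
      · simp only [if_neg hj]
        have hjv : j.val ≤ n - 2 := by
          have h1 := j.isLt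
          have h2 : j.val ≠ n - 1 := fun h => hj (Fin.ext h)
          omega
        have hμj : μ m' ≤ μ j := hμ j m' hjv
        have hδle : δ ≤ μ j - μ m := by rw [hδ']; linarith
        exact mul_le_mul_of_nonneg_right hδle (sq_nonneg (α j))
    have hsum1 : ∑ j, (if j = m then (0:ℝ) else δ * α j ^ 2) = δ * s := by
      have hrw : ∀ j : Fin n, (if j = m then (0:ℝ) else δ * α j ^ 2)
          = δ * α j ^ 2 - (if j = m then δ * α j ^ 2 else 0) := by
        intro j; split <;> simp
      rw [Finset.sum_congr rfl fun j _ => hrw j, Finset.sum_sub_distrib,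
        Finset.sum_ite_eq' Finset.univ m (fun j => δ * α j ^ 2), ← Finset.mul_sum, hα1]
      simp [hsdef, ha]
      ring
    have hq_sub : δ * s ≤ q - μ m := by
      have h1 : q - μ m = ∑ j, (μ j - μ m) * α j ^ 2 := by
        simp only [sub_mul, Finset.sum_sub_distrib, ← Finset.mul_sum, hα1, hqdef]
        ring
      rw [h1, ← hsum1]
      exact Finset.sum_le_sum fun j _ => hkey j
    have hquad : v ⬝ᵥ A.mulVec v - z ⬝ᵥ A.mulVec z ≤ -((4 + γ) * β) := by
      rw [hvAv, hq]
      have heq : s⁻¹ * (μ m - 2 * a ^ 2 * μ m + a ^ 2 * q) - q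
          = s⁻¹ * ((1 - 2 * a ^ 2) * (μ m - q)) := by
        field_simp
        ring
      rw [heq]
      have h1 : (1 - 2 * a ^ 2) * (μ m - q) ≤ (1 - 2 * a ^ 2) * (-(δ * s)) := by
        apply mul_le_mul_of_nonneg_left (by linarith) (by nlinarith)
      calc s⁻¹ * ((1 - 2 * a ^ 2) * (μ m - q))
          ≤ s⁻¹ * ((1 - 2 * a ^ 2) * (-(δ * s))) := by
            apply mul_le_mul_of_nonneg_left h1 (by positivity)
        _ = -((1 - 2 * a ^ 2) * δ) * (s⁻¹ * s) := by ring
        _ = -((1 - 2 * a ^ 2) * δ) := by rw [inv_mul_cancel₀ (ne_of_gt hs)]; ring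
        _ ≤ -((4 + γ) * β) := by linarith
    -- quartic bounds
    have hzsum : ∑ k, z k ^ 2 = 1 := by
      rw [← hzz]
      exact Finset.sum_congr rfl fun k _ => sq (z k)
    have hvsum : ∑ k, v k ^ 2 = 1 := by
      have h1 : ∑ k, (t • w) k ^ 2 = t ^ 2 * (w ⬝ᵥ w) := by
        simp only [Pi.smul_apply, smul_eq_mul, dotProduct, Finset.mul_sum]
        exact Finset.sum_congr rfl fun k _ => by ring
      have hww : w ⬝ᵥ w = s := by
        simp only [hwdef, sub_dotProduct, dotProduct_sub, dotProduct_smul, smul_dotProduct,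
          smul_eq_mul, hortho, hpz, hzp, hzz]
        simp [hsdef]
        ring
      rw [hvdef, h1, ht2, hww, inv_mul_cancel₀ (ne_of_gt hs)]
    have hz4 : ∑ k, z k ^ 4 ≤ 1 := by
      calc ∑ k, z k ^ 4 ≤ ∑ k, z k ^ 2 := by
            apply Finset.sum_le_sum
            intro k _
            have hk : z k ^ 2 ≤ 1 := by
              rw [← hzsum]
              exact Finset.single_le_sum (fun j _ => sq_nonneg (z j)) (Finset.mem_univ k)
            calc z k ^ 4 = z k ^ 2 * z k ^ 2 := by ring
              _ ≤ z k ^ 2 * 1 := mul_le_mul_of_nonneg_left hk (sq_nonneg _)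
              _ = z k ^ 2 := mul_one _
        _ = 1 := hzsum
    have hv4 : ∑ k, v k ^ 4 ≤ 1 := by
      calc ∑ k, v k ^ 4 ≤ ∑ k, v k ^ 2 := by
            apply Finset.sum_le_sum
            intro k _
            have hk : v k ^ 2 ≤ 1 := by
              rw [← hvsum]
              exact Finset.single_le_sum (fun j _ => sq_nonneg (v j)) (Finset.mem_univ k)
            calc v k ^ 4 = v k ^ 2 * v k ^ 2 := by ring
              _ ≤ v k ^ 2 * 1 := mul_le_mul_of_nonneg_left hk (sq_nonneg _)
              _ = v k ^ 2 := mul_one _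
        _ = 1 := hvsum
    have hS1 : 2 * ∑ k, z k ^ 2 * v k ^ 2 ≤ (∑ k, z k ^ 4) + ∑ k, v k ^ 4 := by
      rw [Finset.mul_sum, ← Finset.sum_add_distrib]
      exact Finset.sum_le_sum fun k _ => by nlinarith [sq_nonneg (z k ^ 2 - v k ^ 2)]
    -- combine
    have h3β : (0:ℝ) ≤ 3 * β := by linarith
    have hb1 := mul_le_mul_of_nonneg_left hS1 h3β
    have hb2 := mul_le_mul_of_nonneg_left hz4 hβpos.le
    have hb3 := mul_le_mul_of_nonneg_left hv4 h3β
    have hexp : -((4 + γ) * β) = -(4 * β) - γ * β := by ring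
    rw [hexp] at hquad
    linarith [hquad, hb1, hb2, hb3]
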